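/- Let F be a field and consider matrices A ∈ F^{m×m}, B_i ∈ F^{m×r_i}, C_i ∈ F^{q_i×m} for i = 0,…,w+1, with each K_i having distinct indeterminate entries, all ranks computed over the rational function field F(K). Then rank(A + Σ_{i=0}^{w+1} B_i K_i C_i) = min{ rank([A B_{w+1}] + Σ_{i=0}^{w} B_i K_i [C_i 0]), rank([A; C_{w+1}] + Σ_{i=0}^{w} [B_i; 0] K_i C_i) }, where [C_i 0] pads C_i with r_{w+1} zero columns and [B_i; 0] pads B_i with q_{w+1} zero rows. -/

import Mathlib

/-!
Put `A' = A + ∑_{i ≤ w} B_i K_i C_i`. Then the left-hand side is `rank (A' + B K C)` for the last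
relay `(B, K, C)`, and the two augmented matrices are `[A' B]` and `[A'; C]`. Over any field,
`rank (M + B K C) ≤ min (rank [M B]) (rank [M; C])` for every `K`, and some `K` attains this bound:
as long as `rank (M + B K C)` is below both, a rank-one change of `K` raises it. The indeterminate
matrix `K_{w+1}` does at least as well as any such `K₀`: specialising its entries to those of `K₀`
is a ring homomorphism on the polynomial matrix behind the whole expression, and a nonzero minor of
the specialisation lifts to a nonzero minor of the polynomial matrix.
-/

open Matrix

namespace Matrix

section Blocks

variable {α ι : Type*} [Semiring α] [Fintype ι] {m n n' m' : Type*}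
  {r q : ι → Type*} [∀ i, Fintype (r i)] [∀ i, Fintype (q i)]

theorem fromCols_add_sum_mul_mul_fromCols_zero (A : Matrix m n α) (A₂ : Matrix m n' α)
    (B : ∀ i, Matrix m (r i) α) (K : ∀ i, Matrix (r i) (q i) α) (C : ∀ i, Matrix (q i) n α) :
    fromCols A A₂ + ∑ i, B i * K i * fromCols (C i) (0 : Matrix (q i) n' α) =
      fromCols (A + ∑ i, B i * K i * C i) A₂ := by
  ext a (j | j) <;> simp [Matrix.sum_apply, mul_apply]

theorem fromRows_add_sum_fromRows_zero_mul_mul (A : Matrix m n α) (A₂ : Matrix m' n α)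
    (B : ∀ i, Matrix m (r i) α) (K : ∀ i, Matrix (r i) (q i) α) (C : ∀ i, Matrix (q i) n α) :
    fromRows A A₂ + ∑ i, fromRows (B i) (0 : Matrix m' (r i) α) * K i * C i =
      fromRows (A + ∑ i, B i * K i * C i) A₂ := by
  ext (a | a) j <;> simp [Matrix.sum_apply, mul_apply]

end Blocks

section Minors

variable {E : Type*} [Field E] {m n : Type*} [Fintype n]

theorem exists_linearIndependent_col_comp (A : Matrix m n E) {k : ℕ} (hk : A.rank = k) :
    ∃ c : Fin k → n, LinearIndependent E (A.col ∘ c) := by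
  obtain ⟨κ, a, ha, hspan, hli⟩ := exists_linearIndependent' E A.col
  have : Fintype κ := Fintype.ofInjective a ha
  have hcard : Fintype.card κ = k := by
    rw [linearIndependent_iff_card_eq_finrank_span.1 hli, Set.finrank, hspan, ← hk,
      rank_eq_finrank_span_cols]
  let e : Fin k ≃ κ := (Fintype.equivFinOfCardEq hcard).symm
  exact ⟨a ∘ e, hli.comp e e.injective⟩

theorem exists_submatrix_det_ne_zero [Fintype m] (A : Matrix m n E) :
    ∃ (r : Fin A.rank → m) (c : Fin A.rank → n), (A.submatrix r c).det ≠ 0 := by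
  obtain ⟨c, hc⟩ := A.exists_linearIndependent_col_comp rfl
  have hrank : (A.submatrix id c)ᵀ.rank = A.rank := by
    rw [LinearIndependent.rank_matrix (M := (A.submatrix id c)ᵀ) hc, Fintype.card_fin]
  obtain ⟨r, hr⟩ := (A.submatrix id c)ᵀ.exists_linearIndependent_col_comp hrank
  refine ⟨r, c, ?_⟩
  rw [← isUnit_iff_ne_zero, ← isUnit_iff_isUnit_det, ← linearIndependent_rows_iff_isUnit]
  exact hr

theorem rank_map_le_rank_map_of_injective [Fintype m] {S E' : Type*} [CommRing S] [Field E']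
    (Q : Matrix m n S) (g : S →+* E) {f : S →+* E'} (hf : Function.Injective f) :
    (Q.map g).rank ≤ (Q.map f).rank := by
  obtain ⟨r, c, hdet⟩ := (Q.map g).exists_submatrix_det_ne_zero
  have hQ : (Q.submatrix r c).det ≠ 0 := fun h => hdet (by
    rw [submatrix_map, ← RingHom.mapMatrix_apply, ← RingHom.map_det, h, map_zero])
  calc (Q.map g).rank = ((Q.map f).submatrix r c).rank := by
        rw [rank_of_det_ne_zero, Fintype.card_fin]
        rwa [submatrix_map, ← RingHom.mapMatrix_apply, ← RingHom.map_det, map_ne_zero_iff f hf]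
    _ ≤ (Q.map f).rank := rank_submatrix_le _ _ _

end Minors

section SingleRelay

variable {E : Type*} [Field E] {m n r q : Type*} [Fintype n] [Fintype r]

theorem rank_add_mul_mul_le_min [Fintype m] [Fintype q] (M : Matrix m n E) (B : Matrix m r E)
    (K : Matrix r q E) (C : Matrix q n E) :
    (M + B * K * C).rank ≤ min (fromCols M B).rank (fromRows M C).rank := by
  classical
  refine le_min ?_ ?_
  · rw [show M + B * K * C = fromCols M B * fromRows (1 : Matrix n n E) (K * C) by
      rw [fromCols_mul_fromRows, Matrix.mul_one, Matrix.mul_assoc]]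
    exact rank_mul_le_left _ _
  · rw [show M + B * K * C = fromCols (1 : Matrix m m E) (B * K) * fromRows M C by
      rw [fromCols_mul_fromRows, Matrix.one_mul]]
    exact rank_mul_le_right _ _

theorem rank_fromCols_add_mul_mul [Fintype q] (M : Matrix m n E) (B : Matrix m r E)
    (K : Matrix r q E) (C : Matrix q n E) :
    (fromCols (M + B * K * C) B).rank = (fromCols M B).rank := by
  classical
  rw [show fromCols (M + B * K * C) B =
      fromCols M B * fromBlocks (1 : Matrix n n E) 0 (K * C) (1 : Matrix r r E) by
    rw [fromCols_mul_fromBlocks]; simp [Matrix.mul_assoc]]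
  apply rank_mul_eq_left_of_isUnit_det
  simp

theorem rank_fromRows_add_mul_mul [Fintype m] [Fintype q] (M : Matrix m n E) (B : Matrix m r E)
    (K : Matrix r q E) (C : Matrix q n E) :
    (fromRows (M + B * K * C) C).rank = (fromRows M C).rank := by
  rw [← rank_transpose, transpose_fromRows, transpose_add, transpose_mul, transpose_mul,
    ← Matrix.mul_assoc, rank_fromCols_add_mul_mul, ← transpose_fromRows, rank_transpose]

theorem exists_mulVec_notMem_range_of_rank_lt_rank_fromCols {N : Matrix m n E}
    {B : Matrix m r E} (h : N.rank < (fromCols N B).rank) :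
    ∃ y, B *ᵥ y ∉ LinearMap.range N.mulVecLin := by
  by_contra! hB
  have hle : LinearMap.range (fromCols N B).mulVecLin ≤ LinearMap.range N.mulVecLin := by
    rintro _ ⟨x, rfl⟩
    rw [mulVecLin_apply, fromCols_mulVec]
    exact add_mem (LinearMap.mem_range_self _ _) (hB _)
  exact h.not_ge (Submodule.finrank_mono hle)

theorem exists_mulVec_eq_zero_and_mulVec_ne_zero_of_rank_lt_rank_fromRows {N : Matrix m n E}
    {C : Matrix q n E} (h : N.rank < (fromRows N C).rank) :
    ∃ z, N *ᵥ z = 0 ∧ C *ᵥ z ≠ 0 := by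
  by_contra! hC
  have hker : LinearMap.ker (fromRows N C).mulVecLin = LinearMap.ker N.mulVecLin := by
    ext z
    simp only [LinearMap.mem_ker, mulVecLin_apply, fromRows_mulVec]
    exact ⟨fun hz => by simpa using congrArg (· ∘ Sum.inl) hz, fun hz => by simp [hz, hC z hz]⟩
  have hN := LinearMap.finrank_range_add_finrank_ker N.mulVecLin
  have hNC := LinearMap.finrank_range_add_finrank_ker (fromRows N C).mulVecLin
  rw [hker] at hNC
  exact h.ne (by unfold rank; omega)

theorem rank_lt_rank_add_vecMulVec [Fintype m] {N : Matrix m n E} {u : m → E} {v z : n → E}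
    (hu : u ∉ LinearMap.range N.mulVecLin) (hz : N *ᵥ z = 0) (hvz : v ⬝ᵥ z ≠ 0) :
    N.rank < (N + vecMulVec u v).rank := by
  have hmulVec (x : n → E) : (N + vecMulVec u v) *ᵥ x = N *ᵥ x + (v ⬝ᵥ x) • u := by
    rw [add_mulVec, vecMulVec_mulVec, op_smul_eq_smul]
  have hlt : LinearMap.range N.mulVecLin < LinearMap.range (N + vecMulVec u v).mulVecLin := by
    refine SetLike.lt_iff_le_and_exists.2
      ⟨?_, u, LinearMap.mem_range.2 ⟨(v ⬝ᵥ z)⁻¹ • z, ?_⟩, hu⟩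
    · rintro _ ⟨x, rfl⟩
      refine ⟨x - ((v ⬝ᵥ x) * (v ⬝ᵥ z)⁻¹) • z, ?_⟩
      rw [mulVecLin_apply, mulVecLin_apply, hmulVec, mulVec_sub, mulVec_smul, hz, smul_zero,
        sub_zero, dotProduct_sub, dotProduct_smul, smul_eq_mul, mul_assoc, inv_mul_cancel₀ hvz,
        mul_one, sub_self, zero_smul, add_zero]
    · rw [mulVecLin_apply, hmulVec, mulVec_smul, hz, smul_zero, zero_add, dotProduct_smul,
        smul_eq_mul, inv_mul_cancel₀ hvz, one_smul]
  exact Submodule.finrank_lt_finrank_of_lt hlt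

theorem exists_rank_lt_rank_add_mul_mul [Fintype m] [Fintype q] {N : Matrix m n E}
    {B : Matrix m r E} {C : Matrix q n E} (hB : N.rank < (fromCols N B).rank)
    (hC : N.rank < (fromRows N C).rank) : ∃ K : Matrix r q E, N.rank < (N + B * K * C).rank := by
  classical
  obtain ⟨y, hy⟩ := exists_mulVec_notMem_range_of_rank_lt_rank_fromCols hB
  obtain ⟨z, hz, hCz⟩ := exists_mulVec_eq_zero_and_mulVec_ne_zero_of_rank_lt_rank_fromRows hC
  obtain ⟨j, hj⟩ := Function.ne_iff.1 hCz
  refine ⟨vecMulVec y (Pi.single j 1), ?_⟩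
  rw [mul_vecMulVec, vecMulVec_mul]
  refine rank_lt_rank_add_vecMulVec hy hz ?_
  rwa [← dotProduct_mulVec, single_one_dotProduct]

theorem exists_rank_add_mul_mul_eq_min [Fintype m] [Fintype q] (M : Matrix m n E)
    (B : Matrix m r E) (C : Matrix q n E) :
    ∃ K : Matrix r q E, (M + B * K * C).rank = min (fromCols M B).rank (fromRows M C).rank := by
  let defect (K : Matrix r q E) : ℕ :=
    min (fromCols M B).rank (fromRows M C).rank - (M + B * K * C).rank
  obtain ⟨K, hK⟩ : ∃ K, ∀ K', defect K ≤ defect K' :=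
    ⟨_, fun K' => Function.argmin_le defect K'⟩
  refine ⟨K, le_antisymm (rank_add_mul_mul_le_min M B K C) (not_lt.1 fun hlt => ?_)⟩
  obtain ⟨K', hK'⟩ := exists_rank_lt_rank_add_mul_mul (N := M + B * K * C) (B := B) (C := C)
    (by rw [rank_fromCols_add_mul_mul]; exact hlt.trans_le (min_le_left _ _))
    (by rw [rank_fromRows_add_mul_mul]; exact hlt.trans_le (min_le_right _ _))
  rw [add_assoc, ← Matrix.add_mul, ← Matrix.mul_add] at hK'
  have hmin := hK (K + K')
  have := rank_add_mul_mul_le_min M B (K + K') C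
  simp only [defect] at hmin
  omega

theorem rank_add_mul_mul_eq_min_of_forall_rank_le [Fintype m] [Fintype q] {M : Matrix m n E}
    {B : Matrix m r E} {C : Matrix q n E} {K : Matrix r q E}
    (hK : ∀ K₀ : Matrix r q E, (M + B * K₀ * C).rank ≤ (M + B * K * C).rank) :
    (M + B * K * C).rank = min (fromCols M B).rank (fromRows M C).rank := by
  obtain ⟨K₀, hK₀⟩ := exists_rank_add_mul_mul_eq_min M B C
  exact le_antisymm (rank_add_mul_mul_le_min M B K C) (hK₀ ▸ hK K₀)

end SingleRelay

section Indeterminates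

open MvPolynomial

variable {F R ι m n : Type*} [CommRing F] [Field R] [Fintype ι] [Fintype m] [Fintype n]
  {r q : ι → Type*} [∀ i, Fintype (r i)] [∀ i, Fintype (q i)]

theorem rank_add_sum_mul_mul_le_rank_indeterminates
    (f : MvPolynomial (Σ i, r i × q i) F →+* R) (hf : Function.Injective f) (A : Matrix m n F)
    (B : ∀ i, Matrix m (r i) F) (C : ∀ i, Matrix (q i) n F) (v : (Σ i, r i × q i) → R) :
    (A.map (f.comp MvPolynomial.C) + ∑ i, (B i).map (f.comp MvPolynomial.C) *
        of (fun a b => v ⟨i, (a, b)⟩) * (C i).map (f.comp MvPolynomial.C)).rank ≤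
      (A.map (f.comp MvPolynomial.C) + ∑ i, (B i).map (f.comp MvPolynomial.C) *
        of (fun a b => f (X ⟨i, (a, b)⟩)) * (C i).map (f.comp MvPolynomial.C)).rank := by
  let c : F →+* MvPolynomial (Σ i, r i × q i) F := MvPolynomial.C
  let x : (Σ i, r i × q i) → MvPolynomial (Σ i, r i × q i) F := X
  let P := A.map c + ∑ i, (B i).map c * of (fun a b => x ⟨i, (a, b)⟩) * (C i).map c
  have hP (g : MvPolynomial (Σ i, r i × q i) F →+* R) : P.map g =
      A.map (g.comp MvPolynomial.C) + ∑ i, (B i).map (g.comp MvPolynomial.C) *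
        of (fun a b => g (X ⟨i, (a, b)⟩)) * (C i).map (g.comp MvPolynomial.C) := by
    ext a b
    simp [P, c, x, Matrix.sum_apply, mul_apply]
  have := P.rank_map_le_rank_map_of_injective (eval₂Hom (f.comp MvPolynomial.C) v) hf
  rw [hP, hP] at this
  simpa using this

end Indeterminates

end Matrix

theorem stmt_15 {F : Type*} [Field F] {w m : ℕ} {r q : Fin (w + 2) → ℕ}
    (A : Matrix (Fin m) (Fin m) F)
    (B : ∀ i, Matrix (Fin m) (Fin (r i)) F)
    (C : ∀ i, Matrix (Fin (q i)) (Fin m) F) :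
    (let R := FractionRing (MvPolynomial ((i : Fin (w + 2)) × (Fin (r i) × Fin (q i))) F)
     let ι : F →+* R :=
       (algebraMap (MvPolynomial ((i : Fin (w + 2)) × (Fin (r i) × Fin (q i))) F) R).comp
         MvPolynomial.C
     let K : ∀ i, Matrix (Fin (r i)) (Fin (q i)) R := fun i =>
       Matrix.of fun a b =>
         algebraMap (MvPolynomial ((i : Fin (w + 2)) × (Fin (r i) × Fin (q i))) F) R
           (MvPolynomial.X ⟨i, (a, b)⟩)
     let last : Fin (w + 2) := Fin.last (w + 1)
     (A.map ⇑ι + ∑ i, (B i).map ⇑ι * K i * (C i).map ⇑ι).rank =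
       min
         (fromCols (A.map ⇑ι) ((B last).map ⇑ι) +
             ∑ i : Fin (w + 1), (B i.castSucc).map ⇑ι * K i.castSucc *
               fromCols ((C i.castSucc).map ⇑ι)
                 (0 : Matrix (Fin (q i.castSucc)) (Fin (r last)) R)).rank
         (fromRows (A.map ⇑ι) ((C last).map ⇑ι) +
             ∑ i : Fin (w + 1),
               fromRows ((B i.castSucc).map ⇑ι)
                 (0 : Matrix (Fin (q last)) (Fin (r i.castSucc)) R) *
                 K i.castSucc * (C i.castSucc).map ⇑ι).rank) := by
  intro R ι K last
  let S := MvPolynomial ((i : Fin (w + 2)) × (Fin (r i) × Fin (q i))) F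
  rw [fromCols_add_sum_mul_mul_fromCols_zero, fromRows_add_sum_fromRows_zero_mul_mul,
    Fin.sum_univ_castSucc, ← add_assoc]
  refine rank_add_mul_mul_eq_min_of_forall_rank_le fun K₀ => ?_
  let v (s : (i : Fin (w + 2)) × (Fin (r i) × Fin (q i))) : R :=
    Fin.lastCases (motive := fun i => Fin (r i) × Fin (q i) → R) (fun ab => K₀ ab.1 ab.2)
      (fun j ab => algebraMap S R (MvPolynomial.X ⟨j.castSucc, ab⟩)) s.1 s.2
  have hspec := rank_add_sum_mul_mul_le_rank_indeterminates (algebraMap S R)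
    (IsFractionRing.injective S R) A B C v
  refine le_of_eq_of_le ?_ (hspec.trans_eq ?_) <;>
    rw [Fin.sum_univ_castSucc (n := w + 1), ← add_assoc]
  simp only [v, Fin.lastCases_castSucc, Fin.lastCases_last]
  rfl
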